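/- For every Boolean algebra B, there is a generalized Galois-Tukey connection from the reaping relation of P(ω)/fin to the reaping relation of the reduced power ωB/Fin. In particular 𝔯 ≤ 𝔯(ωB/Fin) and 𝔰(ωB/Fin) ≤ 𝔰. -/

import Mathlib

/-- A relational system `⟨A₋, A, A₊⟩`. -/
structure RelSys : Type 1 where
  Dom : Type
  Cod : Type
  Rel : Dom → Cod → Prop

/-- The dominating number `𝔡(A)` of a relational system. -/
noncomputable def dNum (S : RelSys) : Cardinal :=
  sInf { c | ∃ Y : Set S.Cod, Cardinal.mk Y = c ∧ ∀ x : S.Dom, ∃ y ∈ Y, S.Rel x y }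

/-- The bounding number `𝔟(A)` of a relational system. -/
noncomputable def bNum (S : RelSys) : Cardinal :=
  sInf { c | ∃ X : Set S.Dom, Cardinal.mk X = c ∧ ∀ y : S.Cod, ∃ x ∈ X, ¬ S.Rel x y }

/-- A generalized Galois–Tukey connection from `S` to `T` (`S ≤_T T`). -/
def GT (S T : RelSys) : Prop :=
  ∃ (φm : S.Dom → T.Dom) (φp : T.Cod → S.Cod),
    ∀ a b, T.Rel (φm a) b → S.Rel a (φp b)

/-- Galois–Tukey equivalence. -/
def GTequiv (S T : RelSys) : Prop := GT S T ∧ GT T S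

/-- The σ-version `A^σ` of a relational system. -/
def sigmaSys (S : RelSys) : RelSys :=
  ⟨S.Dom, ℕ → S.Cod, fun a f => ∃ n, S.Rel a (f n)⟩

/-- Sequential composition `A;B` of relational systems. -/
def seqComp (S T : RelSys) : RelSys :=
  ⟨S.Dom × (S.Cod → T.Dom), S.Cod × T.Cod,
   fun p q => S.Rel p.1 q.1 ∧ T.Rel (p.2 q.1) q.2⟩

/-- An antichain in a Boolean algebra: pairwise disjoint nonzero elements. -/
def BAAntichain {α : Type} [BooleanAlgebra α] (A : Set α) : Prop :=
  (∀ a ∈ A, a ≠ ⊥) ∧ ∀ a ∈ A, ∀ b ∈ A, a ≠ b → a ⊓ b = ⊥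

/-- A maximal antichain in a Boolean algebra. -/
def MaxAC {α : Type} [BooleanAlgebra α] (A : Set α) : Prop :=
  BAAntichain A ∧ ∀ b : α, b ≠ ⊥ → ∃ a ∈ A, a ⊓ b ≠ ⊥

/-- The countable chain condition. -/
def CCC (α : Type) [BooleanAlgebra α] : Prop :=
  ∀ A : Set α, BAAntichain A → A.Countable

/-- `C` refines `A` (written `A ≤ C`): every element of `C` is below some element of `A`. -/
def Refines {α : Type} [BooleanAlgebra α] (A C : Set α) : Prop :=
  ∀ c ∈ C, ∃ a ∈ A, c ≤ a

/-- `C` almost refines `A` (written `A ≤* C`). -/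
def AlmostRefines {α : Type} [BooleanAlgebra α] (A C : Set α) : Prop :=
  ∃ F : Finset α, ↑F ⊆ A ∧ Refines ((A \ ↑F) ∪ {F.sup id}) C

/-- The set of maximal antichains of `α`. -/
def PartT (α : Type) [BooleanAlgebra α] : Type := {A : Set α // MaxAC A}

/-- The refinement relational system `Part(α)`. -/
def PartSys (α : Type) [BooleanAlgebra α] : RelSys :=
  ⟨PartT α, PartT α, fun A C => Refines A.1 C.1⟩

/-- The almost-refinement relational system `Part*(α)`. -/
def PartStar (α : Type) [BooleanAlgebra α] : RelSys :=
  ⟨PartT α, PartT α, fun A C => AlmostRefines A.1 C.1⟩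

/-- The eventual domination relational system `(ωω, ≤*, ωω)`. -/
def domSys : RelSys :=
  ⟨ℕ → ℕ, ℕ → ℕ, fun f g => ∀ᶠ n in Filter.atTop, f n ≤ g n⟩

/-- Quotients of Boolean rings are Boolean rings. -/
instance quotBooleanRing (R : Type) [BooleanRing R] (I : Ideal R) :
    BooleanRing (R ⧸ I) :=
  { (inferInstance : CommRing (R ⧸ I)) with
    isIdempotentElem := fun a => by
      obtain ⟨x, rfl⟩ := Ideal.Quotient.mk_surjective a
      show _ * _ = _
      rw [← map_mul, BooleanRing.mul_self] }

/-- The quotient of a Boolean algebra by an ideal (presented as a ring ideal of the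
associated Boolean ring), again viewed as a Boolean algebra. -/
def quotAlg (α : Type) [BooleanAlgebra α] (I : Ideal (AsBoolRing α)) : Type :=
  AsBoolAlg (AsBoolRing α ⧸ I)

noncomputable instance quotAlgBA (α : Type) [BooleanAlgebra α] (I : Ideal (AsBoolRing α)) :
    BooleanAlgebra (quotAlg α I) :=
  inferInstanceAs (BooleanAlgebra (AsBoolAlg (AsBoolRing α ⧸ I)))

/-- The quotient map from a Boolean algebra to its quotient algebra. -/
def quotCls {α : Type} [BooleanAlgebra α] (I : Ideal (AsBoolRing α)) (a : α) : quotAlg α I :=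
  toBoolAlg (Ideal.Quotient.mk I (toBoolRing a))

/-- The ideal of finite subsets of `ω`, as a ring ideal of `P(ω)`. -/
def finIdeal : Ideal (AsBoolRing (Set ℕ)) where
  carrier := {x | (ofBoolRing x : Set ℕ).Finite}
  zero_mem' := by simp [ofBoolRing_zero, Set.bot_eq_empty]
  add_mem' := by
    intro a b ha hb
    simpa [ofBoolRing_add] using ((ha.union hb).subset (Set.symmDiff_subset_union))
  smul_mem' := by
    intro c x hx
    simpa [smul_eq_mul, ofBoolRing_mul] using hx.subset (by simp [Set.inf_eq_inter])

/-- `P(ω)/fin`. -/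
def PomegaFin : Type := quotAlg (Set ℕ) finIdeal

noncomputable instance : BooleanAlgebra PomegaFin := quotAlgBA _ _

/-- The ideal `Fin` of the product algebra `ωB`: functions with finite support. -/
def finSuppIdeal (B : Type) [BooleanAlgebra B] : Ideal (AsBoolRing (ℕ → B)) where
  carrier := {x | {n | (ofBoolRing x : ℕ → B) n ≠ ⊥}.Finite}
  zero_mem' := by simp [ofBoolRing_zero]
  add_mem' := by
    intro a b ha hb
    refine ((ha.union hb).subset ?_)
    intro n hn
    simp only [ofBoolRing_add, Pi.symmDiff_apply, Set.mem_setOf_eq] at hn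
    by_contra h
    try push_neg at h
    simp only [Set.mem_union, Set.mem_setOf_eq] at h
    push_neg at h
    simp [h.1, h.2] at hn
  smul_mem' := by
    intro c x hx
    refine hx.subset ?_
    intro n hn
    simp only [smul_eq_mul, ofBoolRing_mul, Pi.inf_apply, Set.mem_setOf_eq] at hn
    simp only [Set.mem_setOf_eq]
    intro h
    simp [h] at hn

/-- The reduced power `ωB/Fin` of a Boolean algebra `B`. -/
def redPow (B : Type) [BooleanAlgebra B] : Type := quotAlg (ℕ → B) (finSuppIdeal B)

noncomputable instance (B : Type) [BooleanAlgebra B] : BooleanAlgebra (redPow B) := quotAlgBA _ _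
/-- The reaping relational system of a Boolean algebra. -/
def reapSys (α : Type) [BooleanAlgebra α] : RelSys :=
  ⟨α, {r : α // r ≠ ⊥}, fun b r => r.1 ≤ b ∨ r.1 ⊓ b = ⊥⟩

/-- An ultrafilter on a Boolean algebra. -/
def IsBAUltrafilter {α : Type} [BooleanAlgebra α] (U : Set α) : Prop :=
  ⊥ ∉ U ∧ (∀ a ∈ U, ∀ b ∈ U, a ⊓ b ∈ U) ∧ (∀ a ∈ U, ∀ b, a ≤ b → b ∈ U) ∧
    ∀ a : α, a ∈ U ∨ aᶜ ∈ U

/-- A principal ultrafilter: one generated by a single element. -/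
def IsPrincipal {α : Type} [BooleanAlgebra α] (U : Set α) : Prop :=
  ∃ a : α, U = {b | a ≤ b}

/-- The ultrafilter number of a Boolean algebra: the least cofinality of `(U, ≥)`
over non-principal ultrafilters `U`. -/
noncomputable def uNum (α : Type) [BooleanAlgebra α] : Cardinal :=
  sInf { c | ∃ U : Set α, IsBAUltrafilter U ∧ ¬ IsPrincipal U ∧
    ∃ D : Set α, D ⊆ U ∧ (∀ u ∈ U, ∃ d ∈ D, d ≤ u) ∧ Cardinal.mk D = c }

/-
`P(ω)/fin` embeds into `ωB/Fin` by `[A] ↦ [χ_A]` with `χ_A n = if n ∈ A then ⊤ else ⊥`; in the other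
direction send `[f]` to the class of its support `{n | f n ≠ ⊥}`, which is infinite when `[f] ≠ 0`.
Since `supp (f \ χ_A) = supp f \ A` and `supp (f ⊓ χ_A) = supp f ∩ A`, `[f]` lies below (is disjoint
from) `[χ_A]` exactly when `[supp f]` lies below (is disjoint from) `[A]`: this is the Galois–Tukey
connection. It transfers the cardinal bounds because `ωB/Fin` is nontrivial and `P(ω)/fin` is atomless,
so that `𝔯(ωB/Fin)` and `𝔰` are infima of nonempty classes of cardinals (`sInf ∅ = 0`).
-/

lemma dNum_le_of_GT {S T : RelSys} (h : GT S T) (hT : ∀ x : T.Dom, ∃ y, T.Rel x y) :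
    dNum S ≤ dNum T := by
  unfold dNum
  obtain ⟨φm, φp, hφ⟩ := h
  refine le_csInf ?_ ?_
  · exact ⟨_, Set.univ, rfl, fun x => by simpa using hT x⟩
  rintro c ⟨Y, rfl, hY⟩
  refine le_trans (csInf_le' ⟨φp '' Y, rfl, fun x => ?_⟩) Cardinal.mk_image_le
  obtain ⟨y, hyY, hy⟩ := hY (φm x)
  exact ⟨φp y, Set.mem_image_of_mem φp hyY, hφ x y hy⟩

lemma bNum_le_of_GT {S T : RelSys} (h : GT S T) (hS : ∀ y : S.Cod, ∃ x, ¬ S.Rel x y) :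
    bNum T ≤ bNum S := by
  unfold bNum
  obtain ⟨φm, φp, hφ⟩ := h
  refine le_csInf ?_ ?_
  · exact ⟨_, Set.univ, rfl, fun y => by simpa using hS y⟩
  rintro c ⟨X, rfl, hX⟩
  refine le_trans (csInf_le' ⟨φm '' X, rfl, fun y => ?_⟩) Cardinal.mk_image_le
  obtain ⟨x, hxX, hx⟩ := hX (φp y)
  exact ⟨φm x, Set.mem_image_of_mem φm hxX, fun hrel => hx (hφ x y hrel)⟩

section Reaping

variable {α β : Type} [BooleanAlgebra α] [BooleanAlgebra β]

lemma reapSys_exists_rel [Nontrivial α] (b : α) : ∃ r, (reapSys α).Rel b r := by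
  by_cases hb : b = ⊥
  · exact ⟨⟨⊤, top_ne_bot⟩, Or.inr (by simp [hb])⟩
  · exact ⟨⟨b, hb⟩, Or.inl le_rfl⟩

lemma reapSys_exists_not_rel (hα : ∀ r : α, r ≠ ⊥ → ∃ b, b ≠ ⊥ ∧ b < r)
    (r : (reapSys α).Cod) : ∃ b, ¬ (reapSys α).Rel b r := by
  obtain ⟨b, hb, hbr⟩ := hα r.1 r.2
  refine ⟨b, not_or.2 ⟨hbr.not_ge, ?_⟩⟩
  rwa [inf_eq_right.2 hbr.le]

lemma GT_reapSys_of_maps (φ : α → β) (ψ : β → α) (hψ : ∀ r, r ≠ ⊥ → ψ r ≠ ⊥)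
    (hle : ∀ a r, r ≤ φ a → ψ r ≤ a) (hdisj : ∀ a r, r ⊓ φ a = ⊥ → ψ r ⊓ a = ⊥) :
    GT (reapSys α) (reapSys β) :=
  ⟨φ, fun r => ⟨ψ r.1, hψ r.1 r.2⟩, fun a r h => h.imp (hle a r.1) (hdisj a r.1)⟩

end Reaping

section QuotCls

variable {α : Type} [BooleanAlgebra α] (I : Ideal (AsBoolRing α))

def quotClsHom : BoundedLatticeHom α (quotAlg α I) :=
  (Ideal.Quotient.mk I).asBoolAlg.comp (OrderIso.asBoolAlgAsBoolRing α).symm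

lemma coe_quotClsHom : ⇑(quotClsHom I) = quotCls I := rfl

lemma quotCls_surjective : Function.Surjective (quotCls I) := by
  intro x
  obtain ⟨y, hy⟩ := Ideal.Quotient.mk_surjective (ofBoolAlg x)
  exact ⟨ofBoolRing y, by simp only [quotCls, toBoolRing_ofBoolRing, hy]; rfl⟩

lemma quotCls_inf (a b : α) : quotCls I (a ⊓ b) = quotCls I a ⊓ quotCls I b :=
  map_inf (quotClsHom I) a b

variable {I}

lemma quotCls_eq_bot_iff {a : α} : quotCls I a = ⊥ ↔ toBoolRing a ∈ I := by
  show toBoolAlg (Ideal.Quotient.mk I (toBoolRing a)) = toBoolAlg 0 ↔ _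
  rw [toBoolAlg_inj, Ideal.Quotient.eq_zero_iff_mem]

lemma quotCls_le_iff {a b : α} : quotCls I a ≤ quotCls I b ↔ toBoolRing (a \ b) ∈ I := by
  rw [← sdiff_eq_bot_iff, ← quotCls_eq_bot_iff, ← coe_quotClsHom, map_sdiff']

end QuotCls

def PomegaFin.cls (A : Set ℕ) : PomegaFin := quotCls finIdeal A

namespace PomegaFin

lemma cls_surjective : Function.Surjective cls := quotCls_surjective finIdeal

lemma cls_inf (A A' : Set ℕ) : cls (A ⊓ A') = cls A ⊓ cls A' := quotCls_inf finIdeal A A'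

lemma cls_eq_bot_iff {A : Set ℕ} : cls A = ⊥ ↔ A.Finite := quotCls_eq_bot_iff

lemma cls_le_iff {A A' : Set ℕ} : cls A ≤ cls A' ↔ (A \ A').Finite := quotCls_le_iff

lemma exists_ne_bot_lt (r : PomegaFin) (hr : r ≠ ⊥) : ∃ b, b ≠ ⊥ ∧ b < r := by
  obtain ⟨A, rfl⟩ := cls_surjective r
  have hA : A.Infinite := fun h => hr (cls_eq_bot_iff.2 h)
  obtain ⟨t, u, rfl, htu, hcard⟩ := hA.exists_union_disjoint_cardinal_eq_of_infinite
  have hfin : t.Finite ↔ u.Finite := by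
    rw [← Cardinal.lt_aleph0_iff_set_finite, ← Cardinal.lt_aleph0_iff_set_finite, hcard]
  have ht : t.Infinite := fun ht => hA (ht.union (hfin.1 ht))
  have hu : u.Infinite := fun hu => hA ((hfin.2 hu).union hu)
  refine ⟨cls t, fun h => ht (cls_eq_bot_iff.1 h), lt_of_le_not_ge ?_ ?_⟩
  · exact cls_le_iff.2 (Set.sdiff_eq_empty.2 Set.subset_union_left ▸ Set.finite_empty)
  · rwa [cls_le_iff, Set.union_sdiff_left, htu.sdiff_eq_right]

end PomegaFin

section RedPow

variable {B : Type} [BooleanAlgebra B]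

def redPow.cls (f : ℕ → B) : redPow B := quotCls (finSuppIdeal B) f

namespace redPow

lemma cls_surjective : Function.Surjective (cls (B := B)) := quotCls_surjective _

lemma cls_inf (f g : ℕ → B) : cls (f ⊓ g) = cls f ⊓ cls g := quotCls_inf _ f g

lemma cls_top : cls (⊤ : ℕ → B) = ⊤ := map_top (quotClsHom _)

lemma cls_eq_bot_iff {f : ℕ → B} : cls f = ⊥ ↔ {n | f n ≠ ⊥}.Finite := quotCls_eq_bot_iff

lemma cls_le_iff {f g : ℕ → B} : cls f ≤ cls g ↔ {n | (f \ g) n ≠ ⊥}.Finite := quotCls_le_iff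

instance [Nontrivial B] : Nontrivial (redPow B) :=
  ⟨⊤, ⊥, fun h => Set.infinite_univ <|
    (cls_eq_bot_iff.1 (cls_top.trans h)).subset fun _ _ => top_ne_bot⟩

end redPow

variable (B) in
open Classical in
noncomputable def indicatorTop (A : Set ℕ) : ℕ → B := fun n => if n ∈ A then ⊤ else ⊥

lemma support_sdiff_indicatorTop (f : ℕ → B) (A : Set ℕ) :
    {n | (f \ indicatorTop B A) n ≠ ⊥} = {n | f n ≠ ⊥} \ A := by
  ext n; by_cases hn : n ∈ A <;> simp [indicatorTop, hn]

lemma support_inf_indicatorTop (f : ℕ → B) (A : Set ℕ) :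
    {n | (f ⊓ indicatorTop B A) n ≠ ⊥} = {n | f n ≠ ⊥} ∩ A := by
  ext n; by_cases hn : n ∈ A <;> simp [indicatorTop, hn]

lemma redPow.cls_le_indicatorTop_iff {f : ℕ → B} {A : Set ℕ} :
    cls f ≤ cls (indicatorTop B A) ↔ PomegaFin.cls {n | f n ≠ ⊥} ≤ PomegaFin.cls A := by
  rw [PomegaFin.cls_le_iff, cls_le_iff, support_sdiff_indicatorTop]

lemma redPow.cls_inf_indicatorTop_eq_bot_iff {f : ℕ → B} {A : Set ℕ} :
    cls f ⊓ cls (indicatorTop B A) = ⊥ ↔ PomegaFin.cls {n | f n ≠ ⊥} ⊓ PomegaFin.cls A = ⊥ := by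
  rw [← cls_inf, ← PomegaFin.cls_inf, PomegaFin.cls_eq_bot_iff, cls_eq_bot_iff,
    support_inf_indicatorTop]
  rfl

end RedPow

lemma GT_reapSys_PomegaFin_redPow (B : Type) [BooleanAlgebra B] :
    GT (reapSys PomegaFin) (reapSys (redPow B)) := by
  let rep := Function.surjInv PomegaFin.cls_surjective
  let repB := Function.surjInv (redPow.cls_surjective (B := B))
  have hrep (a : PomegaFin) : PomegaFin.cls (rep a) = a :=
    Function.surjInv_eq PomegaFin.cls_surjective a
  have hrepB (r : redPow B) : redPow.cls (repB r) = r :=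
    Function.surjInv_eq redPow.cls_surjective r
  refine GT_reapSys_of_maps (fun a => redPow.cls (indicatorTop B (rep a)))
    (fun r => PomegaFin.cls {n | repB r n ≠ ⊥}) (fun r hr h => hr ?_) (fun a r h => ?_)
    (fun a r h => ?_)
  · rw [← hrepB r]
    exact redPow.cls_eq_bot_iff.2 (PomegaFin.cls_eq_bot_iff.1 h)
  · rw [← hrepB r] at h
    simpa only [hrep] using redPow.cls_le_indicatorTop_iff.1 h
  · rw [← hrepB r] at h
    simpa only [hrep] using redPow.cls_inf_indicatorTop_eq_bot_iff.1 h

/-- `R(P(ω)/fin) ≤_T R(ωB/Fin)`; in particular `𝔯 ≤ 𝔯(ωB/Fin)` and `𝔰(ωB/Fin) ≤ 𝔰`. -/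
theorem stmt15 (B : Type) [BooleanAlgebra B] [Nontrivial B] :
    GT (reapSys PomegaFin) (reapSys (redPow B)) ∧
      dNum (reapSys PomegaFin) ≤ dNum (reapSys (redPow B)) ∧
      bNum (reapSys (redPow B)) ≤ bNum (reapSys PomegaFin) := by
  have hGT := GT_reapSys_PomegaFin_redPow B
  exact ⟨hGT, dNum_le_of_GT hGT (reapSys_exists_rel (α := redPow B)),
    bNum_le_of_GT hGT (reapSys_exists_not_rel PomegaFin.exists_ne_bot_lt)⟩
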